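/- arXiv:2212.04421 — 4 statements merged into one kernel-verified Lean document; each statement's English description precedes it below -/
import Mathlib

section
/- If f, g : ℝ≥0 → ℂ are locally square-integrable, g is essentially bounded, and f is not concentrated on any null set in the sense that for every measurable set S ⊆ ℝ≥0 of natural density zero one has ∫_{S ∩ [0,T]} |f|² dt = o(∫_0^T |f|² dt) as T → ∞, then limsup_{T→∞} |∫_0^T f² g dt| / ∫_0^T |f|² dt ≤ sup { x ≥ 0 : the set where |g| ≥ x has positive upper natural density }. -/
open MeasureTheory Filter

/-- `S` has natural density `d`: `meas(S ∩ [0,T])/T → d` as `T → ∞`. -/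
def HasNatDensity (S : Set ℝ) (d : ℝ) : Prop :=
  Tendsto (fun T : ℝ => (volume (S ∩ Set.Icc (0:ℝ) T)).toReal / T) atTop (nhds d)

/-!
Put `M` for the right-hand side. For `x > M` the level set `S = {x ≤ ‖g‖}` has upper density `0`,
hence natural density `0`. Splitting the integral along `S` and its complement gives
`‖∫₀ᵀ f² g‖ ≤ C ∫_{S ∩ [0,T]} ‖f‖² + x ∫₀ᵀ ‖f‖²`, and after dividing by `∫₀ᵀ ‖f‖²` the first term
tends to `0` because `f` is not concentrated on `S`. So the limsup is at most every `x > M`.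
-/

noncomputable def upperNatDensity (S : Set ℝ) : ℝ :=
  limsup (fun T : ℝ => (volume (S ∩ Set.Icc (0:ℝ) T)).toReal / T) atTop

lemma volume_inter_Icc_div_mem_Icc (S : Set ℝ) {T : ℝ} (hT : 0 < T) :
    (volume (S ∩ Set.Icc (0:ℝ) T)).toReal / T ∈ Set.Icc (0:ℝ) 1 := by
  refine ⟨by positivity, (div_le_one hT).mpr (ENNReal.toReal_le_of_le_ofReal hT.le ?_)⟩
  calc volume (S ∩ Set.Icc (0:ℝ) T) ≤ volume (Set.Icc (0:ℝ) T) :=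
        measure_mono Set.inter_subset_right
    _ = ENNReal.ofReal T := by rw [Real.volume_Icc, sub_zero]

lemma upperNatDensity_univ : upperNatDensity Set.univ = 1 := by
  refine Tendsto.limsup_eq (tendsto_const_nhds.congr' ?_)
  filter_upwards [eventually_gt_atTop (0:ℝ)] with T hT
  rw [Set.univ_inter, Real.volume_Icc, sub_zero, ENNReal.toReal_ofReal hT.le, div_self hT.ne']

lemma upperNatDensity_empty : upperNatDensity ∅ = 0 := by
  simp [upperNatDensity]

lemma hasNatDensity_zero_of_upperNatDensity_nonpos {S : Set ℝ} (hS : upperNatDensity S ≤ 0) :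
    HasNatDensity S 0 := by
  have hbounds : ∀ᶠ T in atTop, (volume (S ∩ Set.Icc (0:ℝ) T)).toReal / T ∈ Set.Icc (0:ℝ) 1 :=
    (eventually_gt_atTop 0).mono fun T hT => volume_inter_Icc_div_mem_Icc S hT
  have hle : ∀ᶠ T in atTop, (volume (S ∩ Set.Icc (0:ℝ) T)).toReal / T ≤ 1 :=
    hbounds.mono fun _ h => h.2
  have hge : ∀ᶠ T in atTop, 0 ≤ (volume (S ∩ Set.Icc (0:ℝ) T)).toReal / T :=
    hbounds.mono fun _ h => h.1
  exact tendsto_of_le_liminf_of_limsup_le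
    (le_liminf_of_le (isCoboundedUnder_ge_of_eventually_le _ hle) hge) hS ⟨1, hle⟩ ⟨0, hge⟩

lemma norm_integral_sq_mul_le {α : Type*} [MeasurableSpace α] {μ : Measure α} {f g : α → ℂ}
    (hf : Integrable (fun t => ‖f t‖ ^ 2) μ) {S : Set α} (hS : MeasurableSet S) {C x : ℝ}
    (hx : 0 ≤ x) (hgC : ∀ t ∈ S, ‖g t‖ ≤ C) (hgx : ∀ t ∉ S, ‖g t‖ ≤ x) :
    ‖∫ t, f t ^ 2 * g t ∂μ‖ ≤ C * ∫ t in S, ‖f t‖ ^ 2 ∂μ + x * ∫ t, ‖f t‖ ^ 2 ∂μ := by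
  have hfS : Integrable (S.indicator fun t => ‖f t‖ ^ 2) μ := hf.indicator hS
  have hpointwise : ∀ t, ‖f t ^ 2 * g t‖ ≤ C * S.indicator (fun t => ‖f t‖ ^ 2) t + x * ‖f t‖ ^ 2 := by
    intro t
    rw [norm_mul, norm_pow]
    by_cases ht : t ∈ S
    · rw [Set.indicator_of_mem ht]
      nlinarith [mul_le_mul_of_nonneg_left (hgC t ht) (sq_nonneg ‖f t‖),
        mul_nonneg hx (sq_nonneg ‖f t‖)]
    · rw [Set.indicator_of_notMem ht, mul_zero, zero_add, mul_comm x]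
      exact mul_le_mul_of_nonneg_left (hgx t ht) (sq_nonneg _)
  calc ‖∫ t, f t ^ 2 * g t ∂μ‖ ≤ ∫ t, ‖f t ^ 2 * g t‖ ∂μ := norm_integral_le_integral_norm _
    _ ≤ ∫ t, (C * S.indicator (fun t => ‖f t‖ ^ 2) t + x * ‖f t‖ ^ 2) ∂μ :=
        integral_mono_of_nonneg (.of_forall fun _ => norm_nonneg _)
          ((hfS.const_mul C).add (hf.const_mul x)) (.of_forall hpointwise)
    _ = C * ∫ t in S, ‖f t‖ ^ 2 ∂μ + x * ∫ t, ‖f t‖ ^ 2 ∂μ := by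
        rw [integral_add (hfS.const_mul C) (hf.const_mul x), integral_const_mul,
          integral_const_mul, integral_indicator hS]

lemma limsup_norm_integral_sq_mul_div_le {f g : ℝ → ℂ}
    (hf : ∀ T : ℝ, IntegrableOn (fun t => ‖f t‖ ^ 2) (Set.Ioc 0 T))
    {C : ℝ} (hgb : ∀ t, ‖g t‖ ≤ C)
    (hpos : ∀ᶠ T in atTop, 0 < ∫ t in Set.Ioc (0:ℝ) T, ‖f t‖ ^ 2)
    {S : Set ℝ} (hS : MeasurableSet S)
    (hfS : Tendsto (fun T : ℝ => (∫ t in S ∩ Set.Ioc 0 T, ‖f t‖ ^ 2) /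
      ∫ t in Set.Ioc (0:ℝ) T, ‖f t‖ ^ 2) atTop (nhds 0))
    {x : ℝ} (hx : 0 ≤ x) (hgx : ∀ t ∉ S, ‖g t‖ ≤ x) :
    limsup (fun T : ℝ => ‖∫ t in Set.Ioc (0:ℝ) T, f t ^ 2 * g t‖ /
      ∫ t in Set.Ioc (0:ℝ) T, ‖f t‖ ^ 2) atTop ≤ x := by
  have hbound : Tendsto (fun T : ℝ => C * ((∫ t in S ∩ Set.Ioc 0 T, ‖f t‖ ^ 2) /
      ∫ t in Set.Ioc (0:ℝ) T, ‖f t‖ ^ 2) + x) atTop (nhds x) := by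
    simpa using (hfS.const_mul C).add_const x
  have hle : ∀ᶠ T in atTop, ‖∫ t in Set.Ioc (0:ℝ) T, f t ^ 2 * g t‖ /
      ∫ t in Set.Ioc (0:ℝ) T, ‖f t‖ ^ 2 ≤ C * ((∫ t in S ∩ Set.Ioc 0 T, ‖f t‖ ^ 2) /
      ∫ t in Set.Ioc (0:ℝ) T, ‖f t‖ ^ 2) + x := by
    filter_upwards [hpos] with T hD
    have hint := norm_integral_sq_mul_le (hf T) hS hx (fun t _ => hgb t) hgx
    rw [Measure.restrict_restrict hS] at hint
    rw [div_le_iff₀ hD, add_mul, mul_assoc, div_mul_cancel₀ _ hD.ne']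
    exact hint
  have hnonneg : ∀ᶠ T in atTop, 0 ≤ ‖∫ t in Set.Ioc (0:ℝ) T, f t ^ 2 * g t‖ /
      ∫ t in Set.Ioc (0:ℝ) T, ‖f t‖ ^ 2 :=
    hpos.mono fun _ hD => div_nonneg (norm_nonneg _) hD.le
  calc _ ≤ limsup (fun T : ℝ => C * ((∫ t in S ∩ Set.Ioc 0 T, ‖f t‖ ^ 2) /
        ∫ t in Set.Ioc (0:ℝ) T, ‖f t‖ ^ 2) + x) atTop :=
        limsup_le_limsup hle (isCoboundedUnder_le_of_eventually_le _ hnonneg)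
          hbound.isBoundedUnder_le
    _ = x := hbound.limsup_eq

theorem stmt2 (f g : ℝ → ℂ)
    (hf : ∀ T : ℝ, IntegrableOn (fun t => ‖f t‖^2) (Set.Ioc 0 T))
    (hg : Measurable g) (C : ℝ) (hgb : ∀ t, ‖g t‖ ≤ C)
    (hpos : ∀ᶠ T in atTop, 0 < ∫ t in Set.Ioc (0:ℝ) T, ‖f t‖^2)
    (hcns : ∀ S : Set ℝ, MeasurableSet S → HasNatDensity S 0 →
      Tendsto (fun T : ℝ => (∫ t in S ∩ Set.Ioc 0 T, ‖f t‖^2) /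
        ∫ t in Set.Ioc (0:ℝ) T, ‖f t‖^2) atTop (nhds 0)) :
    limsup (fun T : ℝ => ‖∫ t in Set.Ioc (0:ℝ) T, (f t)^2 * g t‖ /
        ∫ t in Set.Ioc (0:ℝ) T, ‖f t‖^2) atTop
      ≤ sSup {x : ℝ | 0 ≤ x ∧
          0 < limsup (fun T : ℝ =>
            (volume ({t : ℝ | x ≤ ‖g t‖} ∩ Set.Icc (0:ℝ) T)).toReal / T) atTop} := by
  change _ ≤ sSup {x : ℝ | 0 ≤ x ∧ 0 < upperNatDensity {t | x ≤ ‖g t‖}}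
  set A := {x : ℝ | 0 ≤ x ∧ 0 < upperNatDensity {t | x ≤ ‖g t‖}}
  have hbdd : BddAbove A := by
    refine ⟨C, fun x ⟨_, hx⟩ => not_lt.mp fun hCx => hx.ne' ?_⟩
    have hempty : {t | x ≤ ‖g t‖} = ∅ :=
      Set.eq_empty_of_forall_notMem fun t ht => (hgb t).not_gt (hCx.trans_le ht)
    rw [hempty, upperNatDensity_empty]
  have hzero : (0:ℝ) ∈ A := ⟨le_rfl, by simp [upperNatDensity_univ]⟩
  refine le_of_forall_gt_imp_ge_of_dense fun x hx => ?_
  have hx0 : 0 ≤ x := (le_csSup hbdd hzero).trans hx.le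
  have hdens : HasNatDensity {t | x ≤ ‖g t‖} 0 :=
    hasNatDensity_zero_of_upperNatDensity_nonpos
      (not_lt.mp fun h => (le_csSup hbdd ⟨hx0, h⟩).not_gt hx)
  have hS : MeasurableSet {t | x ≤ ‖g t‖} := measurableSet_le measurable_const hg.norm
  exact limsup_norm_integral_sq_mul_div_le hf hgb hpos hS (hcns _ hS hdens) hx0
    fun t ht => (not_le.mp ht).le
end

section
/- Fix k ∈ ℕ and σ ∈ (1/2, 1), and assume μ(1/2) < 1/k, i.e., there exists A > 0 such that ζ(r + iT) ≪ T^{(1-A)/k} uniformly for σ ≤ r ≤ 2 as T → ∞. Then for every real λ: lim_{T→∞} (1/T)∫_1^T ζ(σ+it)^k e^{-iλt} dt = d_k(n)/n^σ if λ = -log n for some positive integer n, and the limit is 0 otherwise. -/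
open MeasureTheory Filter

/-- `dk k n` is the `k`-fold divisor function. -/
noncomputable def dk (k n : ℕ) : ℕ := (ArithmeticFunction.zeta ^ k) n

/-!
On the line `Re s = 2` the Dirichlet series `ζ(s)^k = ∑ d_k(m) m^{-s}` converges absolutely, so
its mean against `e^{ixt}` can be taken term by term: `T⁻¹ ∫₁ᵀ e^{i(x - log m)t} dt` is bounded by
`1` and tends to `1` if `log m = x` and to `0` otherwise, and dominated convergence leaves only the
term with `m = e^x`. Cauchy's theorem for `ζ(s)^k e^{xs}` on the rectangle `[σ, 2] × [1, T]` moves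
the line of integration to `Re s = σ`: the bottom edge is a constant and the top edge is
`O(T^{1-A})` by the bound on `ζ`, so both vanish after division by `T`.
-/

open Complex Set Topology

lemma norm_exp_I_mul_ofReal_mul (θ t : ℝ) : ‖exp (I * θ * t)‖ = 1 := by
  simp [norm_exp]

lemma norm_setIntegral_Ioc_exp_I_mul_le (θ : ℝ) {T : ℝ} (hT : 1 ≤ T) :
    ‖∫ t in Ioc 1 T, exp (I * θ * t)‖ ≤ T - 1 := by
  have := norm_setIntegral_le_of_norm_le_const (μ := volume) (s := Ioc (1:ℝ) T)
    (C := 1) (f := fun t : ℝ => exp (I * θ * t)) measure_Ioc_lt_top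
    (fun t _ => (norm_exp_I_mul_ofReal_mul θ t).le)
  simpa [Real.volume_real_Ioc_of_le hT] using this

lemma norm_setIntegral_Ioc_exp_I_mul_le_of_ne_zero {θ : ℝ} (hθ : θ ≠ 0) {T : ℝ} (hT : 1 ≤ T) :
    ‖∫ t in Ioc 1 T, exp (I * θ * t)‖ ≤ 2 / |θ| := by
  have hc : I * θ ≠ 0 := mul_ne_zero I_ne_zero (ofReal_ne_zero.mpr hθ)
  rw [← intervalIntegral.integral_of_le hT, integral_exp_mul_complex hc, norm_div, norm_mul,
    norm_I, one_mul, norm_real, Real.norm_eq_abs]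
  gcongr
  refine (norm_sub_le _ _).trans ?_
  rw [norm_exp_I_mul_ofReal_mul, norm_exp_I_mul_ofReal_mul]
  norm_num

lemma tendsto_setIntegral_Ioc_exp_I_mul_div (θ : ℝ) :
    Tendsto (fun T : ℝ => (∫ t in Ioc 1 T, exp (I * θ * t)) / T) atTop
      (𝓝 (if θ = 0 then 1 else 0)) := by
  split_ifs with hθ
  · subst hθ
    have h : Tendsto (fun T : ℝ => ((1 - T⁻¹ : ℝ) : ℂ)) atTop (𝓝 ((1 - 0 : ℝ) : ℂ)) :=
      (continuous_ofReal.tendsto _).comp (tendsto_const_nhds.sub tendsto_inv_atTop_zero)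
    rw [sub_zero, ofReal_one] at h
    refine h.congr' ?_
    filter_upwards [eventually_ge_atTop 1] with T hT
    have hT0 : (T : ℂ) ≠ 0 := by exact_mod_cast (by linarith : T ≠ 0)
    simp only [ofReal_zero, mul_zero, zero_mul, exp_zero, setIntegral_const,
      Real.volume_real_Ioc_of_le hT, real_smul, mul_one]
    push_cast
    field_simp
  · refine squeeze_zero_norm' ?_
      ((tendsto_const_nhds (x := 2 / |θ|)).div_atTop tendsto_id)
    filter_upwards [eventually_ge_atTop 1] with T hT
    rw [norm_div, norm_real, Real.norm_of_nonneg (by linarith)]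
    exact div_le_div_of_nonneg_right (norm_setIntegral_Ioc_exp_I_mul_le_of_ne_zero hθ hT)
      (by linarith)

lemma LSeries.term_add_I_mul_mul_exp (f : ℕ → ℂ) (c x t : ℝ) (m : ℕ) :
    LSeries.term f (c + I * t) m * exp (I * x * t)
      = LSeries.term f c m * exp (I * (x - Real.log m : ℝ) * t) := by
  rcases eq_or_ne m 0 with rfl | hm
  · simp
  have hm' : (m : ℂ) ≠ 0 := Nat.cast_ne_zero.mpr hm
  have hexp :
      exp (I * (x - Real.log m : ℝ) * t) = exp (I * x * t) / exp (Real.log m * (I * t)) := by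
    rw [← exp_sub]; push_cast; ring_nf
  rw [LSeries.term_of_ne_zero hm, LSeries.term_of_ne_zero hm, cpow_add _ _ hm',
    cpow_def_of_ne_zero hm' (I * t), ← natCast_log, hexp]
  field_simp

lemma tendsto_setIntegral_Ioc_LSeries_mul_exp_div (f : ℕ → ℂ) {c : ℝ}
    (hf : LSeriesSummable f c) (x : ℝ) :
    Tendsto (fun T : ℝ => (∫ t in Ioc 1 T, LSeries f (c + I * t) * exp (I * x * t)) / T) atTop
      (𝓝 (∑' m : ℕ, if Real.log m = x then LSeries.term f c m else 0)) := by
  set θ : ℕ → ℝ := fun m => x - Real.log m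
  have hexpand : ∀ T : ℝ, 1 ≤ T →
      (∫ t in Ioc 1 T, LSeries f (c + I * t) * exp (I * x * t)) / T
        = ∑' m, LSeries.term f c m * ((∫ t in Ioc 1 T, exp (I * θ m * t)) / T) := by
    intro T hT
    have hint : ∀ m, Integrable (fun t : ℝ => LSeries.term f c m * exp (I * θ m * t))
        (volume.restrict (Ioc 1 T)) :=
      fun m => (by fun_prop : Continuous _).integrableOn_Ioc
    have hnorm : Summable fun m => ∫ t in Ioc 1 T, ‖LSeries.term f c m * exp (I * θ m * t)‖ := by
      simp only [norm_mul, norm_exp_I_mul_ofReal_mul, mul_one, setIntegral_const, smul_eq_mul]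
      exact hf.norm.mul_left _
    simp only [LSeries, ← tsum_mul_right, LSeries.term_add_I_mul_mul_exp]
    rw [← integral_tsum_of_summable_integral_norm hint hnorm, ← tsum_div_const]
    simp only [integral_const_mul, mul_div_assoc]
  have hbound : ∀ᶠ T : ℝ in atTop, ∀ m,
      ‖LSeries.term f c m * ((∫ t in Ioc 1 T, exp (I * θ m * t)) / T)‖ ≤ ‖LSeries.term f c m‖ := by
    filter_upwards [eventually_ge_atTop 1] with T hT m
    rw [norm_mul, norm_div, norm_real, Real.norm_of_nonneg (by linarith)]
    refine mul_le_of_le_one_right (norm_nonneg _) ((div_le_one (by linarith)).mpr ?_)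
    linarith [norm_setIntegral_Ioc_exp_I_mul_le (θ m) hT]
  have hlim := tendsto_tsum_of_dominated_convergence hf.norm
    (fun m => (tendsto_setIntegral_Ioc_exp_I_mul_div (θ m)).const_mul (LSeries.term f c m)) hbound
  have hg : ∀ m, (LSeries.term f c m * if θ m = 0 then 1 else 0)
      = if Real.log m = x then LSeries.term f c m else 0 := fun m => by
    simp only [θ, sub_eq_zero, eq_comm (a := x), mul_ite, mul_one, mul_zero]
  rw [tsum_congr hg] at hlim
  refine hlim.congr' ?_
  filter_upwards [eventually_ge_atTop 1] with T hT
  exact (hexpand T hT).symm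

lemma LSeries.term_mul_exp_log_mul_sub (f : ℕ → ℂ) (a σ : ℝ) (m : ℕ) :
    LSeries.term f a m * exp (Real.log m * (a - σ)) = LSeries.term f σ m := by
  rcases eq_or_ne m 0 with rfl | hm
  · simp
  have hm' : (m : ℂ) ≠ 0 := Nat.cast_ne_zero.mpr hm
  rw [LSeries.term_of_ne_zero hm, LSeries.term_of_ne_zero hm, cpow_def_of_ne_zero hm',
    cpow_def_of_ne_zero hm', ← natCast_log, div_mul_eq_mul_div, div_eq_div_iff (exp_ne_zero _)
    (exp_ne_zero _), mul_assoc, ← exp_add]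
  ring_nf

-- `Real.log 0 = 0 = Real.log 1`, but the `m = 0` term vanishes since `term f s 0 = 0`.
lemma tsum_ite_log_eq_term_of_pos (f : ℕ → ℂ) (s : ℂ) {n : ℕ} (hn : 0 < n) :
    ∑' m : ℕ, (if Real.log m = Real.log n then LSeries.term f s m else 0) = LSeries.term f s n := by
  rw [tsum_eq_single n fun m hmn => ?_, if_pos rfl]
  rcases Nat.eq_zero_or_pos m with rfl | hm
  · simp
  · refine if_neg fun h => hmn ?_
    exact_mod_cast Real.log_injOn_pos (Nat.cast_pos.mpr hm : (0 : ℝ) < m)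
      (Nat.cast_pos.mpr hn : (0 : ℝ) < n) h

lemma tsum_ite_log_eq_zero (f : ℕ → ℂ) (s : ℂ) {x : ℝ} (hx : ∀ n : ℕ, 0 < n → x ≠ Real.log n) :
    ∑' m : ℕ, (if Real.log m = x then LSeries.term f s m else 0) = 0 := by
  refine (tsum_congr fun m => ?_).trans tsum_zero
  rcases Nat.eq_zero_or_pos m with rfl | hm
  · simp
  · exact if_neg (hx m hm).symm

open ArithmeticFunction in
open scoped ArithmeticFunction.zeta in
lemma LSeriesHasSum_dk (k : ℕ) {s : ℂ} (hs : 1 < s.re) :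
    LSeriesHasSum (fun n => (dk k n : ℂ)) s (riemannZeta s ^ k) := by
  induction k with
  | zero =>
    have h : (fun n => (dk 0 n : ℂ)) = LSeries.delta := by
      ext n; simp [dk, LSeries.delta, one_apply]
    rw [h, pow_zero, LSeriesHasSum, funext (LSeries.term_delta s)]
    exact hasSum_ite_eq 1 1
  | succ k ih =>
    have h : (fun n => (dk (k + 1) n : ℂ))
        = ⇑((↑(ζ ^ k) : ArithmeticFunction ℂ) * ↑(ζ : ArithmeticFunction ℕ)) := by
      ext n; rw [← natCoe_mul, ← pow_succ, natCoe_apply]; rfl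
    rw [h, pow_succ]
    refine LSeriesHasSum_mul ?_ ?_
    · simpa only [natCoe_apply, dk] using ih
    · simpa only [natCoe_apply] using LSeriesHasSum_zeta hs

lemma setIntegral_Ioc_vertical_eq_add_horizontal (F : ℂ → ℂ) {σ a b T : ℝ} (hbT : b ≤ T)
    (hF : DifferentiableOn ℂ F (uIcc σ a ×ℂ uIcc b T)) :
    ∫ t in Ioc b T, F (σ + I * t) = (∫ t in Ioc b T, F (a + I * t))
      + I⁻¹ * ((∫ r in σ..a, F (r + I * b)) - ∫ r in σ..a, F (r + I * T)) := by
  have h := Complex.integral_boundary_rect_eq_zero_of_differentiableOn F (σ + I * b) (a + I * T)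
    (by simpa using hF)
  simp only [add_re, ofReal_re, mul_re, I_re, ofReal_im, I_im, add_im, mul_im, smul_eq_mul] at h
  simp only [zero_mul, one_mul, sub_zero, zero_add, add_zero, mul_comm _ I] at h
  rw [← intervalIntegral.integral_of_le hbT, ← intervalIntegral.integral_of_le hbT]
  field_simp
  linear_combination -h

lemma tendsto_intervalIntegral_horizontal_div_atTop (F : ℂ → ℂ) {σ a M β : ℝ} (hβ : β < 1)
    (hF : ∀ᶠ T : ℝ in atTop, ∀ r ∈ uIoc σ a, ‖F (r + I * T)‖ ≤ M * T ^ β) :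
    Tendsto (fun T : ℝ => (∫ r in σ..a, F (r + I * T)) / T) atTop (𝓝 0) := by
  have hdecay : Tendsto (fun T : ℝ => M * |a - σ| * T ^ (β - 1)) atTop (𝓝 0) := by
    simpa using (tendsto_rpow_neg_atTop (by linarith : 0 < 1 - β)).const_mul (M * |a - σ|)
  refine squeeze_zero_norm' ?_ (by simpa using hdecay)
  filter_upwards [hF, eventually_gt_atTop 0] with T hFT hT
  rw [norm_div, norm_real, Real.norm_of_nonneg hT.le, div_le_iff₀ hT, Real.rpow_sub_one hT.ne']
  field_simp
  linarith [intervalIntegral.norm_integral_le_of_norm_le_const hFT]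

lemma norm_pow_le_of_norm_le_mul_rpow {z : ℂ} {C T β : ℝ} {k : ℕ} (hk : k ≠ 0) (hT : 0 ≤ T)
    (hz : ‖z‖ ≤ C * T ^ (β / k)) : ‖z ^ k‖ ≤ C ^ k * T ^ β := by
  calc ‖z ^ k‖ = ‖z‖ ^ k := norm_pow z k
    _ ≤ (C * T ^ (β / k)) ^ k := pow_le_pow_left₀ (norm_nonneg z) hz k
    _ = C ^ k * T ^ β := by
      rw [mul_pow, ← Real.rpow_natCast (T ^ _), ← Real.rpow_mul hT, div_mul_cancel₀ _
        (Nat.cast_ne_zero.mpr hk)]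

lemma differentiableOn_riemannZeta_pow_mul_exp (k : ℕ) (x : ℂ) {s : Set ℂ} (hs : 1 ∉ s) :
    DifferentiableOn ℂ (fun z => riemannZeta z ^ k * exp (x * z)) s := fun z hz =>
  (((differentiableAt_riemannZeta (ne_of_mem_of_not_mem hz hs)).pow k).mul
    (by fun_prop)).differentiableWithinAt

lemma norm_riemannZeta_pow_mul_exp_le {k : ℕ} (hk : k ≠ 0) {σ A C : ℝ}
    (hC : ∀ T : ℝ, 2 ≤ T → ∀ r ∈ Icc σ 2, ‖riemannZeta (r + I * T)‖ ≤ C * T ^ ((1 - A) / k))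
    (x : ℝ) {T : ℝ} (hT : 2 ≤ T) {r : ℝ} (hr : r ∈ Icc σ 2) :
    ‖riemannZeta (r + I * T) ^ k * exp (x * (r + I * T))‖
      ≤ C ^ k * Real.exp (|x| * (|σ| + 2)) * T ^ (1 - A) := by
  have hexp : ‖exp (x * (r + I * T))‖ ≤ Real.exp (|x| * (|σ| + 2)) := by
    rw [norm_exp, Real.exp_le_exp]
    have hr' : |r| ≤ |σ| + 2 := abs_le.mpr ⟨by linarith [neg_abs_le σ, hr.1], by
      linarith [abs_nonneg σ, hr.2]⟩
    simpa using (le_abs_self (x * r)).trans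
      (by rw [abs_mul]; exact mul_le_mul_of_nonneg_left hr' (abs_nonneg x))
  have hzeta := norm_pow_le_of_norm_le_mul_rpow hk (by linarith) (hC T hT r hr)
  rw [norm_mul]
  calc _ ≤ (C ^ k * T ^ (1 - A)) * Real.exp (|x| * (|σ| + 2)) :=
        mul_le_mul hzeta hexp (norm_nonneg _) ((norm_nonneg _).trans hzeta)
    _ = _ := by ring

lemma setIntegral_Ioc_riemannZeta_pow_mul_exp_eq (k : ℕ) (x σ a : ℝ) {b T : ℝ} (hb : 0 < b)
    (hbT : b ≤ T) :
    ∫ t in Ioc b T, riemannZeta (σ + I * t) ^ k * exp (I * x * t)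
      = exp (x * (a - σ)) * (∫ t in Ioc b T, riemannZeta (a + I * t) ^ k * exp (I * x * t))
        + exp (-(x * σ)) * I⁻¹ * ((∫ r in σ..a, riemannZeta (r + I * b) ^ k * exp (x * (r + I * b)))
          - ∫ r in σ..a, riemannZeta (r + I * T) ^ k * exp (x * (r + I * T))) := by
  have hvertical (c : ℝ) : ∫ t in Ioc b T, riemannZeta (c + I * t) ^ k * exp (x * (c + I * t))
      = exp (x * c) * ∫ t in Ioc b T, riemannZeta (c + I * t) ^ k * exp (I * x * t) := by
    rw [← integral_const_mul]
    refine setIntegral_congr_fun measurableSet_Ioc fun t _ => ?_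
    rw [mul_add, exp_add]
    ring_nf
  have h := setIntegral_Ioc_vertical_eq_add_horizontal _ (σ := σ) (a := a) hbT
    (differentiableOn_riemannZeta_pow_mul_exp k x fun h => by
      have h1 : (1 : ℂ).im ∈ uIcc b T := h.2
      rw [uIcc_of_le hbT, one_im] at h1
      exact absurd (hb.trans_le h1.1) (lt_irrefl 0))
  simp only [hvertical] at h
  have hinv : exp (x * σ) * exp (-(x * σ)) = 1 := by rw [← exp_add, add_neg_cancel, exp_zero]
  have hexp : exp (x * (a - σ)) = exp (x * a) * exp (-(x * σ)) := by
    rw [← exp_add]; ring_nf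
  rw [hexp]
  linear_combination exp (-(x * σ)) * h
    - (∫ t in Ioc b T, riemannZeta (σ + I * t) ^ k * exp (I * x * t)) * hinv

theorem tendsto_setIntegral_Ioc_riemannZeta_pow_mul_exp_div {k : ℕ} (hk : k ≠ 0) {σ A C : ℝ}
    (hσ : σ ≤ 2) (hA : 0 < A)
    (hC : ∀ T : ℝ, 2 ≤ T → ∀ r ∈ Icc σ 2, ‖riemannZeta (r + I * T)‖ ≤ C * T ^ ((1 - A) / k))
    (x : ℝ) :
    Tendsto (fun T : ℝ => (∫ t in Ioc 1 T, riemannZeta (σ + I * t) ^ k * exp (I * x * t)) / T)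
      atTop (𝓝 (∑' m : ℕ, if Real.log m = x then LSeries.term (fun n => (dk k n : ℂ)) σ m
        else 0)) := by
  set term := LSeries.term (fun n => (dk k n : ℂ))
  set H : ℝ → ℂ := fun u => ∫ r in σ..2, riemannZeta (r + I * u) ^ k * exp (x * (r + I * u))
  have hright : Tendsto
      (fun T : ℝ => (∫ t in Ioc 1 T, riemannZeta (2 + I * t) ^ k * exp (I * x * t)) / T) atTop
      (𝓝 (∑' m : ℕ, if Real.log m = x then term 2 m else 0)) := by
    have hL (t : ℝ) : LSeries (fun n => (dk k n : ℂ)) (2 + I * t) = riemannZeta (2 + I * t) ^ k :=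
      (LSeriesHasSum_dk k (by simp)).LSeries_eq
    simpa only [ofReal_ofNat, hL] using tendsto_setIntegral_Ioc_LSeries_mul_exp_div _
      (c := 2) (LSeriesHasSum_dk k (by simp)).summable x
  have htop : Tendsto (fun T => H T / T) atTop (𝓝 0) := by
    refine tendsto_intervalIntegral_horizontal_div_atTop (fun s => riemannZeta s ^ k * exp (x * s))
      (M := C ^ k * Real.exp (|x| * (|σ| + 2))) (by linarith : 1 - A < 1) ?_
    filter_upwards [eventually_ge_atTop 2] with T hT r hr
    rw [uIoc_of_le hσ] at hr
    exact norm_riemannZeta_pow_mul_exp_le hk hC x hT (Ioc_subset_Icc_self hr)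
  have hbottom : Tendsto (fun T : ℝ => H 1 / T) atTop (𝓝 0) := by
    simpa [div_eq_mul_inv] using
      ((continuous_ofReal.tendsto 0).comp tendsto_inv_atTop_zero).const_mul (H 1)
  have hlim := (hright.const_mul (exp (x * (2 - σ)))).add
    ((hbottom.sub htop).const_mul (exp (-(x * σ)) * I⁻¹))
  have hterm (m : ℕ) : (exp (x * (2 - σ)) * if Real.log m = x then term 2 m else 0)
      = if Real.log m = x then term σ m else 0 := by
    split_ifs with hm
    · simpa [← hm, mul_comm] using LSeries.term_mul_exp_log_mul_sub (fun n => (dk k n : ℂ)) 2 σ m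
    · exact mul_zero _
  rw [sub_zero, mul_zero, add_zero, ← tsum_mul_left, tsum_congr hterm] at hlim
  refine hlim.congr' ?_
  filter_upwards [eventually_ge_atTop 1] with T hT
  rw [setIntegral_Ioc_riemannZeta_pow_mul_exp_eq k x σ 2 one_pos hT]
  simp only [H, ofReal_one, mul_one, ofReal_ofNat]
  ring

theorem stmt7 (k : ℕ) (hk : 0 < k) (σ : ℝ) (hσ : 1/2 < σ ∧ σ < 1)
    (hμ : ∃ A > (0:ℝ), ∃ C : ℝ, ∀ T : ℝ, 2 ≤ T → ∀ r ∈ Set.Icc σ 2,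
      ‖riemannZeta (r + Complex.I * T)‖ ≤ C * T ^ ((1 - A) / k))
    (l : ℝ) :
    (∀ n : ℕ, 0 < n → l = -Real.log n →
      Tendsto (fun T : ℝ => (∫ t in Set.Ioc (1:ℝ) T,
          (riemannZeta (σ + Complex.I * t))^k * Complex.exp (-Complex.I * l * t)) / T)
        atTop (nhds ((dk k n : ℂ) / (n : ℂ) ^ (σ : ℂ)))) ∧
    ((∀ n : ℕ, 0 < n → l ≠ -Real.log n) →
      Tendsto (fun T : ℝ => (∫ t in Set.Ioc (1:ℝ) T,
          (riemannZeta (σ + Complex.I * t))^k * Complex.exp (-Complex.I * l * t)) / T)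
        atTop (nhds 0)) := by
  obtain ⟨A, hA, C, hC⟩ := hμ
  have hmean := tendsto_setIntegral_Ioc_riemannZeta_pow_mul_exp_div hk.ne' (by linarith)
    hA hC (-l)
  simp only [ofReal_neg, mul_neg, neg_mul] at hmean ⊢
  refine ⟨fun n hn hl => ?_, fun hl => ?_⟩
  · subst hl
    rwa [neg_neg, tsum_ite_log_eq_term_of_pos _ _ hn, LSeries.term_of_ne_zero hn.ne'] at hmean
  · rwa [tsum_ite_log_eq_zero _ _ fun n hn h => hl n hn (by linarith)] at hmean
end

section
/- Let A² be the space of (equivalence classes of) locally square-integrable functions f on ℝ≥0 for which the Fourier coefficients ⟨f, e_λ⟩ = lim_{T→∞} (1/T)∫_0^T f(t) e^{-iλt} dt exist for all λ ∈ ℝ and satisfy Σ_λ |⟨f,e_λ⟩|² < ∞, where f ~ g iff ⟨f-g, e_λ⟩ = 0 for all λ. Then A² with inner product ⟨f,g⟩_{A²} = Σ_λ ⟨f,e_λ⟩ conj(⟨g,e_λ⟩) is a Hilbert space, and every element of A² decomposes as φ + g with g ∈ B² and ⟨φ, e_λ⟩ = 0 for all λ. -/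
open MeasureTheory Filter

/-- A trigonometric polynomial. -/
def TrigPoly (p : ℝ → ℂ) : Prop :=
  ∃ (s : Finset ℝ) (c : ℝ → ℂ), ∀ t : ℝ, p t = ∑ l ∈ s, c l * Complex.exp (Complex.I * l * t)

/-- The square of the Besicovitch seminorm. -/
noncomputable def BnormSq (f : ℝ → ℂ) : ℝ :=
  limsup (fun T : ℝ => (∫ t in Set.Ioc (0:ℝ) T, ‖f t‖^2) / T) atTop

/-- Membership in the Besicovitch space `B²`. -/
def InB2 (f : ℝ → ℂ) : Prop :=
  ∀ ε > (0:ℝ), ∃ p : ℝ → ℂ, TrigPoly p ∧ BnormSq (fun t => f t - p t) < ε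

/-- The Fourier coefficient of `f` at frequency `l` exists and equals `c`. -/
def HasFourierCoeff (f : ℝ → ℂ) (l : ℝ) (c : ℂ) : Prop :=
  Tendsto (fun T : ℝ => (∫ t in Set.Ioc (0:ℝ) T, f t * Complex.exp (-Complex.I * l * t)) / T)
    atTop (nhds c)

/-!
Given a square-summable family `c`, choose finite frequency sets `s 0 ⊆ s 1 ⊆ ⋯` outside of
which `∑ ‖c l‖²` is below `1 / (n + 1)`, and let `g` equal the partial sum
`p n = ∑_{l ∈ s n} c l e_l` on the block `[T n, T (n + 1))`. Over any interval the mean square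
of `p k - p m` is the tail `∑_{s k \ s m} ‖c l‖²` up to an error independent of the length of the
interval, so blocks growing fast enough against these errors make `g` the `B²`-limit of the
`p m`. Fourier coefficients are continuous for the `B²` seminorm (Cauchy–Schwarz), hence those
of `g` are `c`. For the decomposition subtract this `g` from `f`; if `f` is not locally
integrable its coefficients all vanish and `g = 0` does.
-/

open Set Complex Finset Topology
open scoped ComplexConjugate

noncomputable section

lemma norm_exp_I_mul_mul (x t : ℝ) : ‖exp (I * x * t)‖ = 1 := by
  rw [norm_exp]
  simp

lemma norm_exp_neg_I_mul_mul (l t : ℝ) : ‖exp (-I * l * t)‖ = 1 := by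
  rw [norm_exp]
  simp

lemma norm_intervalIntegral_exp_I_mul_le {μ : ℝ} (hμ : μ ≠ 0) (a b : ℝ) :
    ‖∫ t in a..b, exp (I * μ * t)‖ ≤ 2 / |μ| := by
  have hIμ : I * μ ≠ 0 := by simp [hμ]
  rw [integral_exp_mul_complex hIμ, norm_div, norm_mul, norm_I, one_mul, norm_real,
    Real.norm_eq_abs]
  gcongr
  calc _ ≤ ‖exp (I * μ * b)‖ + ‖exp (I * μ * a)‖ := norm_sub_le _ _
    _ = 2 := by rw [norm_exp_I_mul_mul, norm_exp_I_mul_mul]; norm_num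

lemma tendsto_setIntegral_exp_I_mul_div (μ : ℝ) :
    Tendsto (fun T : ℝ => (∫ t in Ioc 0 T, exp (I * μ * t)) / T) atTop
      (𝓝 (if μ = 0 then 1 else 0)) := by
  split_ifs with hμ
  · refine tendsto_const_nhds.congr' ?_
    filter_upwards [eventually_gt_atTop 0] with T hT
    simp [hμ, hT.le, hT.ne']
  · refine squeeze_zero_norm' (a := fun T => 2 / |μ| / T) ?_ ?_
    · filter_upwards [eventually_gt_atTop 0] with T hT
      rw [← intervalIntegral.integral_of_le hT.le, norm_div, norm_real, Real.norm_eq_abs,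
        abs_of_pos hT]
      gcongr
      exact norm_intervalIntegral_exp_I_mul_le hμ 0 T
    · exact tendsto_const_nhds.div_atTop tendsto_id

def trigSum (s : Finset ℝ) (a : ℝ → ℂ) (t : ℝ) : ℂ := ∑ x ∈ s, a x * exp (I * x * t)

section TrigSum

variable (s : Finset ℝ) (a : ℝ → ℂ)

lemma trigPoly_trigSum : TrigPoly (trigSum s a) := ⟨s, a, fun _ => rfl⟩

lemma continuous_trigSum : Continuous (trigSum s a) := by
  unfold trigSum
  fun_prop

lemma norm_trigSum_le (t : ℝ) : ‖trigSum s a t‖ ≤ ∑ x ∈ s, ‖a x‖ := by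
  refine (norm_sum_le _ _).trans (sum_le_sum fun x _ => ?_)
  rw [norm_mul, norm_exp_I_mul_mul, mul_one]

lemma trigSum_sub_trigSum {s' : Finset ℝ} (h : s' ⊆ s) (t : ℝ) :
    trigSum s a t - trigSum s' a t = trigSum (s \ s') a t := by
  simp only [trigSum, sum_sdiff_eq_sub h]

lemma hasFourierCoeff_trigSum (l : ℝ) :
    HasFourierCoeff (trigSum s a) l (if l ∈ s then a l else 0) := by
  have hmul : ∀ t : ℝ, trigSum s a t * exp (-I * l * t)
      = ∑ x ∈ s, a x * exp (I * (x - l : ℝ) * t) := fun t => by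
    simp only [trigSum, sum_mul, mul_assoc, ← exp_add]
    congr! 3
    push_cast
    ring
  have hlim := tendsto_finsetSum s fun x _ =>
    (tendsto_setIntegral_exp_I_mul_div (x - l)).const_mul (a x)
  simp only [sub_eq_zero, mul_ite, mul_one, mul_zero, sum_ite_eq'] at hlim
  refine hlim.congr fun T => ?_
  simp only [hmul]
  rw [integral_finsetSum]
  · simp only [integral_const_mul, sum_div, mul_div_assoc]
  · intro x _
    exact (by fun_prop : Continuous fun t : ℝ => a x * exp (I * (x - l : ℝ) * t)).integrableOn_Ioc

/-- `2 / |x - y|` bounds `‖∫ exp (I (x - y) t)‖` over every interval. -/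
def offDiagWeight (s : Finset ℝ) (a : ℝ → ℂ) : ℝ :=
  ∑ q ∈ s.offDiag, ‖a q.1‖ * ‖a q.2‖ * (2 / |q.1 - q.2|)

lemma offDiagWeight_nonneg : 0 ≤ offDiagWeight s a :=
  sum_nonneg fun _ _ => by positivity

lemma offDiagWeight_mono {s' : Finset ℝ} (h : s' ⊆ s) : offDiagWeight s' a ≤ offDiagWeight s a :=
  sum_le_sum_of_subset_of_nonneg (offDiag_mono h) fun _ _ _ => by positivity

lemma norm_trigSum_sq (t : ℝ) :
    ((‖trigSum s a t‖ ^ 2 : ℝ) : ℂ)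
      = ∑ q ∈ s ×ˢ s, a q.1 * conj (a q.2) * exp (I * (q.1 - q.2 : ℝ) * t) := by
  rw [ofReal_pow, ← mul_conj', trigSum, map_sum, sum_mul_sum, sum_product]
  refine sum_congr rfl fun x _ => sum_congr rfl fun y _ => ?_
  rw [map_mul, ← exp_conj, mul_mul_mul_comm, ← exp_add]
  congr 2
  simp only [map_mul, conj_I, conj_ofReal]
  push_cast
  ring

theorem integral_norm_trigSum_sq_le (A U : ℝ) :
    ∫ t in A..U, ‖trigSum s a t‖ ^ 2 ≤ (U - A) * ∑ x ∈ s, ‖a x‖ ^ 2 + offDiagWeight s a := by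
  classical
  set J : ℝ × ℝ → ℂ := fun q => a q.1 * conj (a q.2) * ∫ t in A..U, exp (I * (q.1 - q.2 : ℝ) * t)
  have hint : ((∫ t in A..U, ‖trigSum s a t‖ ^ 2 : ℝ) : ℂ) = ∑ q ∈ s ×ˢ s, J q := by
    rw [← intervalIntegral.integral_ofReal]
    simp only [norm_trigSum_sq]
    rw [intervalIntegral.integral_finsetSum fun q _ => by
      apply Continuous.intervalIntegrable; fun_prop]
    simp only [J, intervalIntegral.integral_const_mul]
  have hdiag : ∑ q ∈ s.diag, J q = (((U - A) * ∑ x ∈ s, ‖a x‖ ^ 2 : ℝ) : ℂ) := by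
    simp [J, sum_diag, mul_conj', mul_sum, mul_comm]
  have hoff : ‖∑ q ∈ s.offDiag, J q‖ ≤ offDiagWeight s a := by
    refine (norm_sum_le _ _).trans (sum_le_sum fun q hq => ?_)
    have hne : q.1 - q.2 ≠ 0 := sub_ne_zero.2 (mem_offDiag.1 hq).2.2
    rw [norm_mul, norm_mul, RCLike.norm_conj]
    gcongr
    exact norm_intervalIntegral_exp_I_mul_le hne A U
  rw [← diag_union_offDiag, sum_union (disjoint_diag_offDiag s), hdiag] at hint
  have := congrArg re hint
  rw [add_re, ofReal_re, ofReal_re] at this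
  linarith [re_le_norm (∑ q ∈ s.offDiag, J q)]

end TrigSum

def fourierMean (f : ℝ → ℂ) (l T : ℝ) : ℂ := (∫ t in Ioc 0 T, f t * exp (-I * l * t)) / T

lemma hasFourierCoeff_iff {f : ℝ → ℂ} {l : ℝ} {a : ℂ} :
    HasFourierCoeff f l a ↔ Tendsto (fourierMean f l) atTop (𝓝 a) := Iff.rfl

def LocallySqIntegrable (f : ℝ → ℂ) : Prop := ∀ T, MemLp f 2 (volume.restrict (Ioc 0 T))

lemma MeasureTheory.IntegrableOn.mul_exp {f : ℝ → ℂ} {s : Set ℝ} (hf : IntegrableOn f s) (l : ℝ) :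
    IntegrableOn (fun t => f t * exp (-I * l * t)) s :=
  hf.mul_bdd (by fun_prop) (ae_of_all _ fun t => (norm_exp_neg_I_mul_mul l t).le)

lemma fourierMean_sub {f g : ℝ → ℂ} {T : ℝ} (hf : IntegrableOn f (Ioc 0 T))
    (hg : IntegrableOn g (Ioc 0 T)) (l : ℝ) :
    fourierMean (f - g) l T = fourierMean f l T - fourierMean g l T := by
  simp only [fourierMean, Pi.sub_apply, sub_mul, ← sub_div]
  rw [integral_sub (hf.mul_exp l) (hg.mul_exp l)]

lemma HasFourierCoeff.sub {f g : ℝ → ℂ} {l : ℝ} {a b : ℂ}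
    (hf : ∀ T, IntegrableOn f (Ioc 0 T)) (hg : ∀ T, IntegrableOn g (Ioc 0 T))
    (hfa : HasFourierCoeff f l a) (hgb : HasFourierCoeff g l b) :
    HasFourierCoeff (f - g) l (a - b) :=
  (Tendsto.sub hfa hgb).congr fun T => (fourierMean_sub (hf T) (hg T) l).symm

/-- The Bochner integral of a non-integrable function is `0`, so such `f` can only have the
coefficient `0`. -/
lemma HasFourierCoeff.eq_zero_of_not_integrableOn {f : ℝ → ℂ} {l : ℝ} {a : ℂ} {T₀ : ℝ}
    (hT₀ : ¬ IntegrableOn f (Ioc 0 T₀)) (hfa : HasFourierCoeff f l a) : a = 0 := by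
  refine tendsto_nhds_unique hfa (tendsto_const_nhds.congr' ?_)
  filter_upwards [eventually_ge_atTop T₀] with T hT
  have hfe : ¬ IntegrableOn (fun t => f t * exp (-I * l * t)) (Ioc 0 T) := fun h => hT₀ <| by
    refine ((h.mono_set (Ioc_subset_Ioc_right hT)).mul_exp (-l)).congr_fun (fun t _ => ?_)
      measurableSet_Ioc
    simp [mul_assoc, ← exp_add]
  rw [integral_undef hfe, zero_div]

namespace LocallySqIntegrable

variable {f g : ℝ → ℂ}

lemma sub (hf : LocallySqIntegrable f) (hg : LocallySqIntegrable g) :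
    LocallySqIntegrable (f - g) := fun T => (hf T).sub (hg T)

lemma integrableOn (hf : LocallySqIntegrable f) (T : ℝ) : IntegrableOn f (Ioc 0 T) :=
  (hf T).integrable one_le_two

lemma integrableOn_norm_sq (hf : LocallySqIntegrable f) (T : ℝ) :
    IntegrableOn (fun t => ‖f t‖ ^ 2) (Ioc 0 T) :=
  (hf T).integrable_norm_pow two_ne_zero

lemma intervalIntegrable_norm_sq (hf : LocallySqIntegrable f) {a b : ℝ} (ha : 0 ≤ a)
    (hb : 0 ≤ b) : IntervalIntegrable (fun t => ‖f t‖ ^ 2) volume a b :=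
  intervalIntegrable_iff.2 <|
    (hf.integrableOn_norm_sq (max a b)).mono_set (Ioc_subset_Ioc_left (le_min ha hb))

lemma of_bound (hf : Measurable f) (hbdd : ∀ T, ∃ C, ∀ t ≤ T, ‖f t‖ ≤ C) :
    LocallySqIntegrable f := fun T =>
  have ⟨C, hC⟩ := hbdd T
  .of_bound hf.aestronglyMeasurable C <|
    (ae_restrict_iff' measurableSet_Ioc).2 (ae_of_all _ fun _ ht => hC _ ht.2)

/-- Cauchy–Schwarz, via the pointwise bound `‖z‖ ≤ (ε² + ‖z‖²) / (2ε)`. -/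
lemma norm_fourierMean_le (hf : LocallySqIntegrable f) {T ε : ℝ} (hT : 0 < T) (hε : 0 < ε)
    (hsq : ∫ t in Ioc 0 T, ‖f t‖ ^ 2 ≤ ε ^ 2 * T) (l : ℝ) : ‖fourierMean f l T‖ ≤ ε := by
  have hamgm : ∀ t, ‖f t * exp (-I * l * t)‖ ≤ (ε ^ 2 + ‖f t‖ ^ 2) / (2 * ε) := fun t => by
    rw [norm_mul, norm_exp_neg_I_mul_mul, mul_one, le_div_iff₀ (by positivity)]
    nlinarith [sq_nonneg (‖f t‖ - ε)]
  have hbound : IntegrableOn (fun t => (ε ^ 2 + ‖f t‖ ^ 2) / (2 * ε)) (Ioc 0 T) :=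
    ((integrable_const _).add (hf.integrableOn_norm_sq T)).div_const _
  have hint : ‖∫ t in Ioc 0 T, f t * exp (-I * l * t)‖ ≤ (ε ^ 2 * T + ε ^ 2 * T) / (2 * ε) := by
    refine (norm_integral_le_of_norm_le hbound (ae_of_all _ hamgm)).trans ?_
    rw [integral_div, integral_add (integrable_const _) (hf.integrableOn_norm_sq T)]
    simp only [integral_const, MeasurableSet.univ, measureReal_restrict_apply, univ_inter,
      Real.volume_real_Ioc, sub_zero, max_eq_left hT.le, smul_eq_mul]
    gcongr ?_ / _
    linarith
  rw [fourierMean, norm_div, norm_real, Real.norm_eq_abs, abs_of_pos hT, div_le_iff₀ hT]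
  refine hint.trans_eq ?_
  field_simp
  ring

/-- Fourier coefficients are continuous for the Besicovitch seminorm. -/
theorem hasFourierCoeff_of_approx (hf : LocallySqIntegrable f) {l : ℝ} {a : ℂ}
    (happrox : ∀ ε > 0, ∃ q b, LocallySqIntegrable q ∧ HasFourierCoeff q l b ∧ ‖b - a‖ ≤ ε ∧
      ∀ᶠ T in atTop, ∫ t in Ioc 0 T, ‖f t - q t‖ ^ 2 ≤ ε ^ 2 * T) :
    HasFourierCoeff f l a := by
  rw [hasFourierCoeff_iff, Metric.tendsto_nhds]
  intro ε hε
  obtain ⟨q, b, hq, hqb, hba, hfq⟩ := happrox (ε / 3) (by positivity)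
  filter_upwards [hfq, Metric.tendsto_nhds.1 (hasFourierCoeff_iff.1 hqb) (ε / 3) (by positivity),
    eventually_gt_atTop 0] with T hfqT hqT hT
  have hdiff := (hf.sub hq).norm_fourierMean_le hT (by positivity) hfqT l
  rw [fourierMean_sub (hf.integrableOn T) (hq.integrableOn T)] at hdiff
  rw [dist_eq_norm] at hqT ⊢
  calc ‖fourierMean f l T - a‖
      ≤ ‖fourierMean f l T - fourierMean q l T‖ + (‖fourierMean q l T - b‖ + ‖b - a‖) :=
        (norm_sub_le_norm_sub_add_norm_sub _ _ _).trans
          (add_le_add_right (norm_sub_le_norm_sub_add_norm_sub _ _ _) _)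
    _ < ε := by linarith

end LocallySqIntegrable

lemma inB2_of_forall_eventually {f : ℝ → ℂ}
    (h : ∀ ε > 0, ∃ p, TrigPoly p ∧ ∀ᶠ T in atTop, ∫ t in Ioc 0 T, ‖f t - p t‖ ^ 2 ≤ ε * T) :
    InB2 f := by
  intro ε hε
  obtain ⟨p, hp, hfp⟩ := h (ε / 2) (by positivity)
  refine ⟨p, hp, lt_of_le_of_lt ?_ (half_lt_self hε)⟩
  refine limsup_le_of_le (isCoboundedUnder_le_of_eventually_le atTop (x := 0) ?_) ?_
  · filter_upwards [eventually_gt_atTop 0] with T hT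
    exact div_nonneg (setIntegral_nonneg measurableSet_Ioc fun _ _ => by positivity) hT.le
  · filter_upwards [hfp, eventually_gt_atTop 0] with T hT hT0
    rwa [div_le_iff₀ hT0]

lemma inB2_zero : InB2 0 := by
  refine inB2_of_forall_eventually fun ε hε => ⟨0, ⟨∅, 0, fun _ => rfl⟩, ?_⟩
  filter_upwards [eventually_ge_atTop 0] with T hT
  simpa using mul_nonneg hε.le hT

/-- The index `k` with `t ∈ [T k, T (k + 1))`; it is `0` (as `sSup ∅ = 0`) when `t < T 0`. -/
def blockIndex (T : ℕ → ℝ) (t : ℝ) : ℕ := sSup {k | T k ≤ t}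

def glue (T : ℕ → ℝ) (p : ℕ → ℝ → ℂ) (t : ℝ) : ℂ := p (blockIndex T t) t

section Glue

variable {T : ℕ → ℝ} (hT : StrictMono T) (hT_top : Tendsto T atTop atTop)
include hT hT_top

lemma le_blockIndex {k : ℕ} {t : ℝ} (h : T k ≤ t) : k ≤ blockIndex T t := by
  refine le_csSup ?_ h
  obtain ⟨M, hM⟩ := (hT_top.eventually_gt_atTop t).exists
  exact ⟨M, fun _ hj => le_of_lt <| hT.lt_iff_lt.1 (lt_of_le_of_lt hj hM)⟩

omit hT_top in
lemma blockIndex_le {k : ℕ} {t : ℝ} (h : t < T (k + 1)) : blockIndex T t ≤ k :=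
  csSup_le' fun _ hj => Nat.lt_succ_iff.1 <| hT.lt_iff_lt.1 (lt_of_le_of_lt hj h)

lemma blockIndex_eq {k : ℕ} {t : ℝ} (h₁ : T k ≤ t) (h₂ : t < T (k + 1)) : blockIndex T t = k :=
  le_antisymm (blockIndex_le hT h₂) (le_blockIndex hT hT_top h₁)

lemma apply_blockIndex_le {t : ℝ} (h : T 0 ≤ t) : T (blockIndex T t) ≤ t := by
  refine Nat.sSup_mem ⟨0, h⟩ ⟨blockIndex T t, fun j hj => le_blockIndex hT hT_top hj⟩

lemma lt_apply_blockIndex_succ (t : ℝ) : t < T (blockIndex T t + 1) :=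
  lt_of_not_ge fun h => (le_blockIndex hT hT_top h).not_gt (Nat.lt_succ_self _)

lemma monotone_blockIndex : Monotone (blockIndex T) := fun _ _ h =>
  csSup_le' fun _ hj => le_blockIndex hT hT_top (le_trans hj h)

lemma tendsto_blockIndex : Tendsto (blockIndex T) atTop atTop :=
  tendsto_atTop.2 fun k => (eventually_ge_atTop (T k)).mono fun _ => le_blockIndex hT hT_top

lemma glue_eq {p : ℕ → ℝ → ℂ} {k : ℕ} {t : ℝ} (h₁ : T k ≤ t) (h₂ : t < T (k + 1)) :
    glue T p t = p k t := by
  rw [glue, blockIndex_eq hT hT_top h₁ h₂]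

lemma locallySqIntegrable_glue {p : ℕ → ℝ → ℂ} (hp : ∀ n, Measurable (p n)) {C : ℕ → ℝ}
    (hC : Monotone C) (hpC : ∀ n t, ‖p n t‖ ≤ C n) : LocallySqIntegrable (glue T p) := by
  refine .of_bound ?_ fun X => ?_
  · have hmeas : Measurable fun q : ℝ × ℕ => p q.2 q.1 :=
      measurable_from_prod_countable_left fun n => hp n
    exact hmeas.comp (measurable_id.prodMk (monotone_blockIndex hT hT_top).measurable)
  · obtain ⟨M, hM⟩ := (hT_top.eventually_gt_atTop X).exists
    exact ⟨C M, fun t ht => (hpC _ t).trans <| hC <|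
      blockIndex_le hT (lt_of_le_of_lt ht (hM.trans (hT (Nat.lt_succ_self M))))⟩

lemma integral_norm_glue_sub_sq_eq {p : ℕ → ℝ → ℂ} {q : ℝ → ℂ} {k : ℕ} {U : ℝ}
    (h₁ : T k ≤ U) (h₂ : U ≤ T (k + 1)) :
    ∫ t in T k..U, ‖glue T p t - q t‖ ^ 2 = ∫ t in T k..U, ‖p k t - q t‖ ^ 2 := by
  refine intervalIntegral.integral_congr_ae ?_
  filter_upwards [volume.ae_ne (T (k + 1))] with t hne ht
  rw [uIoc_of_le h₁] at ht
  rw [glue_eq hT hT_top ht.1.le (lt_of_le_of_ne (ht.2.trans h₂) hne)]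

variable {p : ℕ → ℝ → ℂ} {m : ℕ} {E : ℕ → ℝ} {τ : ℝ}

lemma integral_norm_glue_sub_sq_le_sum (hT0 : 0 ≤ T 0) (hg : LocallySqIntegrable (glue T p))
    (hpm : LocallySqIntegrable (p m))
    (hblock : ∀ k ≥ m, ∀ A U, A ≤ U → ∫ t in A..U, ‖p k t - p m t‖ ^ 2 ≤ τ * (U - A) + E k)
    {N : ℕ} (hN : m ≤ N) {U : ℝ} (h₁ : T N ≤ U) (h₂ : U ≤ T (N + 1)) :
    ∫ t in T m..U, ‖glue T p t - p m t‖ ^ 2 ≤ τ * (U - T m) + ∑ k ∈ Ico m (N + 1), E k := by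
  have hF : LocallySqIntegrable fun t => glue T p t - p m t := hg.sub hpm
  have hT_nonneg : ∀ k, 0 ≤ T k := fun k => hT0.trans (hT.monotone k.zero_le)
  induction N, hN using Nat.le_induction generalizing U with
  | base =>
    rw [integral_norm_glue_sub_sq_eq hT hT_top h₁ h₂, Nat.Ico_succ_singleton, sum_singleton]
    exact hblock m le_rfl _ _ h₁
  | succ N hN ih =>
    rw [← intervalIntegral.integral_add_adjacent_intervals
      (hF.intervalIntegrable_norm_sq (hT_nonneg m) (hT_nonneg _))
      (hF.intervalIntegrable_norm_sq (hT_nonneg _) ((hT_nonneg _).trans h₁)),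
      sum_Ico_succ_top (by omega), integral_norm_glue_sub_sq_eq hT hT_top h₁ h₂]
    have := ih (hT (Nat.lt_succ_self N)).le le_rfl
    have := hblock (N + 1) (by omega) _ _ h₁
    linarith

/-- Up to block `N` the errors add up to at most `T N / (N + 1)`, which is `o(X)`. -/
theorem eventually_integral_norm_glue_sub_sq_le (hT0 : 0 ≤ T 0)
    (hg : LocallySqIntegrable (glue T p)) (hpm : LocallySqIntegrable (p m))
    (hE : 0 ≤ E) (hTE : ∀ n, (n + 1) * ∑ k ∈ range (n + 1), E k ≤ T n) (hτ : 0 ≤ τ)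
    (hblock : ∀ k ≥ m, ∀ A U, A ≤ U → ∫ t in A..U, ‖p k t - p m t‖ ^ 2 ≤ τ * (U - A) + E k)
    {ε : ℝ} (hε : 0 < ε) :
    ∀ᶠ X in atTop, ∫ t in Ioc 0 X, ‖glue T p t - p m t‖ ^ 2 ≤ (τ + ε) * X := by
  have hF : LocallySqIntegrable fun t => glue T p t - p m t := hg.sub hpm
  have hTm : 0 ≤ T m := hT0.trans (hT.monotone m.zero_le)
  set C := ∫ t in 0..T m, ‖glue T p t - p m t‖ ^ 2
  filter_upwards [eventually_ge_atTop (T m), eventually_ge_atTop (2 * C / ε),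
    (tendsto_blockIndex hT hT_top).eventually_ge_atTop ⌈2 / ε⌉₊] with X hXm hXC hXN
  set N := blockIndex T X
  have hX0 : 0 ≤ X := hTm.trans hXm
  have hTN : T N ≤ X := apply_blockIndex_le hT hT_top ((hT.monotone m.zero_le).trans hXm)
  have hsplit : ∫ t in Ioc 0 X, ‖glue T p t - p m t‖ ^ 2
      = C + ∫ t in T m..X, ‖glue T p t - p m t‖ ^ 2 := by
    rw [← intervalIntegral.integral_of_le hX0, intervalIntegral.integral_add_adjacent_intervals
      (hF.intervalIntegrable_norm_sq le_rfl hTm) (hF.intervalIntegrable_norm_sq hTm hX0)]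
  have hcum := integral_norm_glue_sub_sq_le_sum hT hT_top hT0 hg hpm hblock
    (le_blockIndex hT hT_top hXm) hTN (lt_apply_blockIndex_succ hT hT_top X).le
  have hsum : ∑ k ∈ Ico m (N + 1), E k ≤ ∑ k ∈ range (N + 1), E k :=
    sum_le_sum_of_subset_of_nonneg (fun k hk => by simp at hk ⊢; omega) fun k _ _ => hE k
  have hεN : 2 ≤ ε * N := by
    have := (Nat.le_ceil (2 / ε)).trans (Nat.cast_le.2 hXN)
    rwa [div_le_iff₀ hε, mul_comm] at this
  have hC : C ≤ ε / 2 * X := by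
    rw [div_le_iff₀ hε] at hXC
    linarith
  have hS := sum_nonneg fun k (_ : k ∈ range (N + 1)) => hE k
  have hSX : ∑ k ∈ range (N + 1), E k ≤ ε / 2 * X := by
    nlinarith [hTE N]
  rw [hsplit]
  nlinarith

end Glue

lemma Summable.exists_monotone_sum_lt {α : Type*} {f : α → ℝ} (hf : Summable f) :
    ∃ s : ℕ → Finset α, Monotone s ∧
      ∀ n (u : Finset α), Disjoint u (s n) → ∑ x ∈ u, f x < 1 / (n + 1) := by
  classical
  choose v hv using fun n : ℕ =>
    hf.vanishing (Iio_mem_nhds (by positivity : (0 : ℝ) < 1 / (n + 1)))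
  refine ⟨fun n => (range (n + 1)).biUnion v, fun a b hab => ?_, fun n u hu => hv n u ?_⟩
  · exact biUnion_subset_biUnion_of_subset_left _ (range_subset_range.2 (by omega))
  · exact hu.mono_right (subset_biUnion_of_mem v (self_mem_range_succ n))

lemma locallySqIntegrable_trigSum (s : Finset ℝ) (a : ℝ → ℂ) :
    LocallySqIntegrable (trigSum s a) :=
  .of_bound (continuous_trigSum s a).measurable fun _ => ⟨_, fun t _ => norm_trigSum_le s a t⟩

def blockEnds (E : ℕ → ℝ) (n : ℕ) : ℝ := (n + 1) * (∑ k ∈ range (n + 1), E k + 1)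

section BlockEnds

variable {E : ℕ → ℝ} (hE : 0 ≤ E)
include hE

lemma strictMono_blockEnds : StrictMono (blockEnds E) := by
  refine strictMono_nat_of_lt_succ fun n => ?_
  have h₀ := sum_nonneg fun k (_ : k ∈ range (n + 1)) => hE k
  simp only [blockEnds, sum_range_succ _ (n + 1), Nat.cast_succ]
  have h₁ : 0 ≤ E (n + 1) := hE (n + 1)
  nlinarith

lemma le_blockEnds (n : ℕ) : (n : ℝ) ≤ blockEnds E n := by
  have h₀ := sum_nonneg fun k (_ : k ∈ range (n + 1)) => hE k
  unfold blockEnds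
  nlinarith

lemma tendsto_blockEnds : Tendsto (blockEnds E) atTop atTop :=
  tendsto_atTop_mono (le_blockEnds hE) tendsto_natCast_atTop_atTop

omit hE in
lemma mul_sum_le_blockEnds (n : ℕ) : (n + 1) * ∑ k ∈ range (n + 1), E k ≤ blockEnds E n := by
  unfold blockEnds
  nlinarith

end BlockEnds

def gluedTrigSum (c : ℝ → ℂ) (s : ℕ → Finset ℝ) : ℝ → ℂ :=
  glue (blockEnds fun k => offDiagWeight (s k) c) fun n => trigSum (s n) c

section GluedTrigSum

variable {c : ℝ → ℂ} {s : ℕ → Finset ℝ} (hs : Monotone s)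
include hs

lemma locallySqIntegrable_gluedTrigSum : LocallySqIntegrable (gluedTrigSum c s) :=
  locallySqIntegrable_glue (strictMono_blockEnds fun _ => offDiagWeight_nonneg _ _)
    (tendsto_blockEnds fun _ => offDiagWeight_nonneg _ _)
    (fun _ => (continuous_trigSum _ _).measurable)
    (C := fun n => ∑ x ∈ s n, ‖c x‖)
    (fun _ _ h => sum_le_sum_of_subset_of_nonneg (hs h) fun _ _ _ => norm_nonneg _)
    fun n => norm_trigSum_le (s n) c

lemma integral_norm_trigSum_sub_sq_le {m k : ℕ} (hmk : m ≤ k) {τ : ℝ}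
    (hτ : ∀ u : Finset ℝ, Disjoint u (s m) → ∑ x ∈ u, ‖c x‖ ^ 2 ≤ τ) {A U : ℝ} (hAU : A ≤ U) :
    ∫ t in A..U, ‖trigSum (s k) c t - trigSum (s m) c t‖ ^ 2
      ≤ τ * (U - A) + offDiagWeight (s k) c := by
  simp only [trigSum_sub_trigSum (s k) c (hs hmk)]
  refine (integral_norm_trigSum_sq_le _ c A U).trans
    (add_le_add ?_ (offDiagWeight_mono _ c sdiff_subset))
  rw [mul_comm]
  exact mul_le_mul_of_nonneg_right (hτ _ sdiff_disjoint) (sub_nonneg.2 hAU)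

lemma eventually_integral_norm_gluedTrigSum_sub_sq_le {m : ℕ} {τ : ℝ} (hτ0 : 0 ≤ τ)
    (hτ : ∀ u : Finset ℝ, Disjoint u (s m) → ∑ x ∈ u, ‖c x‖ ^ 2 ≤ τ) {ε : ℝ} (hε : 0 < ε) :
    ∀ᶠ X in atTop, ∫ t in Ioc 0 X, ‖gluedTrigSum c s t - trigSum (s m) c t‖ ^ 2 ≤ (τ + ε) * X :=
  have hE : 0 ≤ fun k => offDiagWeight (s k) c := fun _ => offDiagWeight_nonneg _ _
  eventually_integral_norm_glue_sub_sq_le (strictMono_blockEnds hE) (tendsto_blockEnds hE)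
    (by simpa using le_blockEnds hE 0) (locallySqIntegrable_gluedTrigSum hs)
    (locallySqIntegrable_trigSum _ _)
    hE mul_sum_le_blockEnds hτ0 (fun _ hk _ _ => integral_norm_trigSum_sub_sq_le hs hk hτ) hε

end GluedTrigSum

/-- Riesz–Fischer for `B²`. -/
theorem exists_inB2_hasFourierCoeff {c : ℝ → ℂ} (hc : Summable fun l => ‖c l‖ ^ 2) :
    ∃ g, LocallySqIntegrable g ∧ InB2 g ∧ ∀ l, HasFourierCoeff g l (c l) := by
  obtain ⟨s, hs, htail⟩ := hc.exists_monotone_sum_lt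
  have happrox : ∀ ε > 0, ∃ m : ℕ, (∀ u, Disjoint u (s m) → ∑ x ∈ u, ‖c x‖ ^ 2 < ε) ∧
      ∀ᶠ X in atTop, ∫ t in Ioc 0 X, ‖gluedTrigSum c s t - trigSum (s m) c t‖ ^ 2 ≤ ε * X := by
    intro ε hε
    obtain ⟨m, hm⟩ := exists_nat_one_div_lt (half_pos hε)
    refine ⟨m, fun u hu => (htail m u hu).trans (hm.trans (half_lt_self hε)), ?_⟩
    filter_upwards [eventually_integral_norm_gluedTrigSum_sub_sq_le hs (by positivity)
      (fun u hu => (htail m u hu).le) (half_pos hε), eventually_ge_atTop 0] with X hX hX0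
    nlinarith
  refine ⟨gluedTrigSum c s, locallySqIntegrable_gluedTrigSum hs,
    inB2_of_forall_eventually fun ε hε => ?_, fun l => ?_⟩
  · obtain ⟨m, -, hm⟩ := happrox ε hε
    exact ⟨_, trigPoly_trigSum (s m) c, hm⟩
  refine (locallySqIntegrable_gluedTrigSum hs).hasFourierCoeff_of_approx fun ε hε => ?_
  obtain ⟨m, hmtail, hm⟩ := happrox (ε ^ 2) (by positivity)
  refine ⟨_, _, locallySqIntegrable_trigSum (s m) c, hasFourierCoeff_trigSum (s m) c l, ?_, hm⟩
  split_ifs with hl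
  · simp [hε.le]
  · have hcl := hmtail {l} (disjoint_singleton_left.2 hl)
    rw [sum_singleton] at hcl
    simpa using (pow_lt_pow_iff_left₀ (norm_nonneg _) hε.le two_ne_zero).1 hcl |>.le

end

/-- `A²` is a Hilbert space isometrically isomorphic (via Fourier coefficients) to `ℓ²(ℝ)`,
and decomposes as `E^⊥ ⊕ B²`:
(i) every `f ∈ A²` (all Fourier coefficients exist and are square-summable) splits as
`φ + g` with `g ∈ B²` and all Fourier coefficients of `φ` zero;
(ii) every square-summable coefficient family is realized by some element, with the `B²`
part realizing the coefficients (surjectivity of the coefficient map onto `ℓ²(ℝ)`,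
whence completeness of `A²`). -/
theorem stmt11 :
    (∀ f : ℝ → ℂ, ∀ c : ℝ → ℂ, (∀ l : ℝ, HasFourierCoeff f l (c l)) →
      Summable (fun l : ℝ => ‖c l‖^2) →
      ∃ φ g : ℝ → ℂ, (∀ t, f t = φ t + g t) ∧ InB2 g ∧ (∀ l : ℝ, HasFourierCoeff φ l 0)) ∧
    (∀ c : ℝ → ℂ, Summable (fun l : ℝ => ‖c l‖^2) →
      ∃ g : ℝ → ℂ, InB2 g ∧ ∀ l : ℝ, HasFourierCoeff g l (c l)) := by
  refine ⟨fun f c hfc hc => ?_, fun c hc => ?_⟩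
  · by_cases hf : ∀ T, IntegrableOn f (Ioc 0 T)
    · obtain ⟨g, hg, hgB, hgc⟩ := exists_inB2_hasFourierCoeff hc
      refine ⟨f - g, g, fun t => by simp, hgB, fun l => ?_⟩
      simpa using HasFourierCoeff.sub hf hg.integrableOn (hfc l) (hgc l)
    · obtain ⟨T₀, hT₀⟩ := not_forall.1 hf
      refine ⟨f, 0, fun t => by simp, inB2_zero, fun l => ?_⟩
      simpa [(hfc l).eq_zero_of_not_integrableOn hT₀] using hfc l
  · obtain ⟨g, -, hgB, hgc⟩ := exists_inB2_hasFourierCoeff hc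
    exact ⟨g, hgB, hgc⟩
end

section
/- Let f be locally square-integrable on ℝ≥0 with ∫_0^T |f|² dt ≫ T and ∫_0^T |f|² dt ≪ T. Suppose f is not concentrated on a null set (for every null-density set S, ∫_{S∩[0,T]} |f|² dt = o(T)). Then for every ε > 0 there is a bounded measurable function f_N with limsup_{T→∞} (1/T)∫_0^T |f - f_N|² dt < ε. -/
/-!
Truncate `f` at a level `M`: the error `∫₀ᵀ |f - f_M|²` is the mass of `|f|²` on `{|f| > M}`,
which by Chebyshev has upper density at most `C / M²`. If for every level this mass were
frequently at least `ε T`, pick for each level `k` a time `τₖ ≥ k` witnessing it; the union of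
the pieces `{|f| > k} ∩ (0, τₖ]` still has density zero (the part beyond `τ₀, …, τ_{k-1}` lies
in `{|f| > k}`), yet carries mass `≥ ε τₖ / 2` along `τₖ → ∞`, contradicting non-concentration.
-/

open MeasureTheory Filter

open Set Topology

lemma hasNatDensity_zero_of_eventually_le {S : Set ℝ}
    (h : ∀ δ > 0, ∀ᶠ T in atTop, (volume (S ∩ Icc 0 T)).toReal ≤ δ * T) :
    HasNatDensity S 0 := by
  refine tendsto_order.2 ⟨fun a ha => ?_, fun δ hδ => ?_⟩
  · filter_upwards [eventually_gt_atTop 0] with T hT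
    exact ha.trans_le (by positivity)
  · filter_upwards [h (δ / 2) (half_pos hδ), eventually_gt_atTop 0] with T hST hT
    rw [div_lt_iff₀ hT]
    linarith [mul_lt_mul_of_pos_right (half_lt_self hδ) hT]

lemma hasNatDensity_iUnion_inter_Ioc {E : ℕ → Set ℝ} (hE : Antitone E) {d : ℕ → ℝ}
    (hd : Tendsto d atTop (𝓝 0))
    (hEd : ∀ k, ∀ᶠ T in atTop, (volume (E k ∩ Icc 0 T)).toReal ≤ d k * T) (τ : ℕ → ℝ) :
    HasNatDensity (⋃ k, E k ∩ Ioc 0 (τ k)) 0 := by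
  refine hasNatDensity_zero_of_eventually_le fun δ hδ => ?_
  obtain ⟨k₀, hk₀⟩ := (hd.eventually (gt_mem_nhds (half_pos hδ))).exists
  set A := ∑ j ∈ Finset.range k₀, |τ j|
  have hsub : ∀ T, (⋃ k, E k ∩ Ioc 0 (τ k)) ∩ Icc 0 T ⊆ Icc 0 A ∪ E k₀ ∩ Icc 0 T := by
    rintro T t ⟨ht, htT⟩
    obtain ⟨j, hjE, hjτ⟩ := mem_iUnion.1 ht
    rcases lt_or_ge j k₀ with hj | hj
    · refine Or.inl ⟨hjτ.1.le, hjτ.2.trans ((le_abs_self _).trans ?_)⟩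
      exact Finset.single_le_sum (fun i _ => abs_nonneg (τ i)) (Finset.mem_range.2 hj)
    · exact Or.inr ⟨hE hj hjE, htT⟩
  have hA : 0 ≤ A := Finset.sum_nonneg fun j _ => abs_nonneg (τ j)
  filter_upwards [hEd k₀, eventually_ge_atTop (2 * A / δ), eventually_ge_atTop 0]
    with T hT hAT hT0
  rw [div_le_iff₀ hδ] at hAT
  calc (volume ((⋃ k, E k ∩ Ioc 0 (τ k)) ∩ Icc 0 T)).toReal
      ≤ volume.real (Icc 0 A) + volume.real (E k₀ ∩ Icc 0 T) :=
        (measureReal_mono (hsub T) (measure_union_ne_top measure_Icc_lt_top.ne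
          ((measure_mono inter_subset_right).trans_lt measure_Icc_lt_top).ne)).trans
          (measureReal_union_le _ _)
    _ ≤ A + d k₀ * T := by
        rw [Real.volume_real_Icc_of_le hA, sub_zero]
        exact add_le_add le_rfl hT
    _ ≤ δ * T := by nlinarith

def NotConcentratedOnNullSets (F : ℝ → ℝ) : Prop :=
  ∀ S : Set ℝ, MeasurableSet S → HasNatDensity S 0 →
    Tendsto (fun T : ℝ => (∫ t in S ∩ Ioc 0 T, F t) / T) atTop (𝓝 0)

lemma NotConcentratedOnNullSets.exists_eventually_le {F : ℝ → ℝ}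
    (hF : NotConcentratedOnNullSets F) (hF0 : ∀ t, 0 ≤ F t) (hFi : ∀ T, IntegrableOn F (Ioc 0 T))
    {E : ℕ → Set ℝ} (hEm : ∀ k, MeasurableSet (E k)) (hE : Antitone E) {d : ℕ → ℝ}
    (hd : Tendsto d atTop (𝓝 0))
    (hEd : ∀ k, ∀ᶠ T in atTop, (volume (E k ∩ Icc 0 T)).toReal ≤ d k * T)
    {η : ℝ} (hη : 0 < η) :
    ∃ k, ∀ᶠ T in atTop, (∫ t in E k ∩ Ioc 0 T, F t) / T ≤ η := by
  by_contra! h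
  have : ∀ k : ℕ, ∃ T, (k : ℝ) + 1 ≤ T ∧ η < (∫ t in E k ∩ Ioc 0 T, F t) / T := fun k =>
    ((h k).and_eventually (eventually_ge_atTop _)).exists.imp fun _ hT => ⟨hT.2, hT.1⟩
  choose τ hτk hτη using this
  have hτ : Tendsto τ atTop atTop :=
    tendsto_atTop_mono hτk (tendsto_atTop_add_const_right _ 1 tendsto_natCast_atTop_atTop)
  set S := ⋃ k, E k ∩ Ioc 0 (τ k)
  have hS := hF S (MeasurableSet.iUnion fun k => (hEm k).inter measurableSet_Ioc)
    (hasNatDensity_iUnion_inter_Ioc hE hd hEd τ)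
  refine hη.not_ge (ge_of_tendsto (hS.comp hτ) (Eventually.of_forall fun k => ?_))
  have hτ0 : 0 < τ k := by linarith [hτk k, (k.cast_nonneg : (0 : ℝ) ≤ k)]
  refine (hτη k).le.trans (div_le_div_of_nonneg_right ?_ hτ0.le)
  refine setIntegral_mono_set ((hFi _).mono_set inter_subset_right)
    (Eventually.of_forall hF0) (Eventually.of_forall ?_)
  exact fun t ht => ⟨mem_iUnion.2 ⟨k, ht⟩, ht.2⟩

lemma sq_mul_volume_lt_norm_le_integral {E : Type*} [NormedAddCommGroup E] {g : ℝ → E}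
    {M T : ℝ} (hM : 0 ≤ M) (hg : IntegrableOn (fun t => ‖g t‖ ^ 2) (Ioc 0 T)) :
    M ^ 2 * (volume ({t | M < ‖g t‖} ∩ Icc 0 T)).toReal ≤ ∫ t in Ioc 0 T, ‖g t‖ ^ 2 :=
  calc M ^ 2 * (volume ({t | M < ‖g t‖} ∩ Icc 0 T)).toReal
      = M ^ 2 * (volume.restrict (Ioc 0 T)).real {t | M < ‖g t‖} := by
        rw [measureReal_def, Measure.restrict_apply' measurableSet_Ioc,
          measure_congr ((ae_eq_refl _).inter Ioc_ae_eq_Icc)]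
    _ ≤ M ^ 2 * (volume.restrict (Ioc 0 T)).real {t | M ^ 2 ≤ ‖g t‖ ^ 2} := by
        gcongr
        · exact measure_ne_top _ _
        · exact fun ht => pow_le_pow_left₀ hM ht.le 2
    _ ≤ ∫ t in Ioc 0 T, ‖g t‖ ^ 2 :=
        mul_meas_ge_le_integral_of_nonneg (Eventually.of_forall fun t => by positivity) hg _

section Truncate

variable {α E : Type*} [NormedAddCommGroup E]

noncomputable def truncate (M : ℝ) (g : α → E) (t : α) : E := if ‖g t‖ ≤ M then g t else 0

lemma norm_truncate_le {M : ℝ} (hM : 0 ≤ M) (g : α → E) (t : α) : ‖truncate M g t‖ ≤ M := by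
  unfold truncate
  split_ifs with h
  · exact h
  · simpa using hM

lemma Measurable.truncate [MeasurableSpace α] [MeasurableSpace E] [OpensMeasurableSpace E]
    {g : α → E} (hg : Measurable g) (M : ℝ) : Measurable (truncate M g) :=
  Measurable.ite (measurableSet_le hg.norm measurable_const) hg measurable_const

lemma norm_sub_truncate_sq (M : ℝ) (g : α → E) (t : α) :
    ‖g t - truncate M g t‖ ^ 2 = {t | M < ‖g t‖}.indicator (fun t => ‖g t‖ ^ 2) t := by
  unfold truncate
  by_cases h : ‖g t‖ ≤ M
  · simp [h]
  · simp [h, not_le.1 h]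

lemma setIntegral_norm_sub_truncate_sq [MeasurableSpace α] [MeasurableSpace E]
    [OpensMeasurableSpace E] {μ : Measure α} {g : α → E} (hg : Measurable g) (M : ℝ) (s : Set α) :
    ∫ t in s, ‖g t - truncate M g t‖ ^ 2 ∂μ = ∫ t in {t | M < ‖g t‖} ∩ s, ‖g t‖ ^ 2 ∂μ := by
  have hE : MeasurableSet {t | M < ‖g t‖} := measurableSet_lt measurable_const hg.norm
  simp_rw [norm_sub_truncate_sq, integral_indicator hE, Measure.restrict_restrict hE]

end Truncate

theorem exists_limsup_integral_norm_sub_truncate_lt {g : ℝ → ℂ} (hg : Measurable g)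
    (hgi : ∀ T, IntegrableOn (fun t => ‖g t‖ ^ 2) (Ioc 0 T)) {C : ℝ}
    (hC : ∀ᶠ T in atTop, ∫ t in Ioc 0 T, ‖g t‖ ^ 2 ≤ C * T)
    (hcns : NotConcentratedOnNullSets fun t => ‖g t‖ ^ 2) {ε : ℝ} (hε : 0 < ε) :
    ∃ M, 0 ≤ M ∧
      limsup (fun T => (∫ t in Ioc 0 T, ‖g t - truncate M g t‖ ^ 2) / T) atTop < ε := by
  set E : ℕ → Set ℝ := fun k => {t | (k : ℝ) + 1 < ‖g t‖}
  have hEm : ∀ k, MeasurableSet (E k) := fun k => measurableSet_lt measurable_const hg.norm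
  have hE : Antitone E := fun i j hij t ht =>
    lt_of_le_of_lt (by gcongr) (show (j : ℝ) + 1 < ‖g t‖ from ht)
  have hEd : ∀ k, ∀ᶠ T in atTop,
      (volume (E k ∩ Icc 0 T)).toReal ≤ C / ((k : ℝ) + 1) ^ 2 * T := fun k => by
    filter_upwards [hC] with T hT
    rw [div_mul_eq_mul_div, le_div_iff₀ (by positivity), mul_comm]
    exact (sq_mul_volume_lt_norm_le_integral (by positivity) (hgi T)).trans hT
  have hd : Tendsto (fun k : ℕ => C / ((k : ℝ) + 1) ^ 2) atTop (𝓝 0) :=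
    tendsto_const_nhds.div_atTop <| (tendsto_pow_atTop two_ne_zero).comp
      (tendsto_atTop_add_const_right _ 1 tendsto_natCast_atTop_atTop)
  obtain ⟨k, hk⟩ := hcns.exists_eventually_le (fun t => by positivity) hgi hEm hE hd hEd
    (half_pos hε)
  refine ⟨k + 1, by positivity, (limsup_le_of_le ?_ ?_).trans_lt (half_lt_self hε)⟩
  · refine isCoboundedUnder_le_of_eventually_le atTop (x := 0) ?_
    filter_upwards [eventually_ge_atTop 0] with T hT
    exact div_nonneg (integral_nonneg fun t => by positivity) hT
  · simpa only [setIntegral_norm_sub_truncate_sq hg] using hk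

lemma aemeasurable_of_aemeasurable_norm_sq_sub {α : Type*} [MeasurableSpace α] {μ : Measure α}
    {f : α → ℂ} (h0 : AEMeasurable (fun t => ‖f t‖ ^ 2) μ)
    (h1 : AEMeasurable (fun t => ‖f t - 1‖ ^ 2) μ)
    (hI : AEMeasurable (fun t => ‖f t - Complex.I‖ ^ 2) μ) : AEMeasurable f μ := by
  have hre : AEMeasurable (fun t => (f t).re) μ := by
    refine (((h0.add_const 1).sub h1).div_const 2).congr (Eventually.of_forall fun t => ?_)
    simp only [Pi.sub_apply, Complex.sq_norm, Complex.normSq_apply, Complex.sub_re, Complex.sub_im,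
      Complex.one_re, Complex.one_im]
    ring
  have him : AEMeasurable (fun t => (f t).im) μ := by
    refine (((h0.add_const 1).sub hI).div_const 2).congr (Eventually.of_forall fun t => ?_)
    simp only [Pi.sub_apply, Complex.sq_norm, Complex.normSq_apply, Complex.sub_re, Complex.sub_im,
      Complex.I_re, Complex.I_im]
    ring
  refine ((Complex.measurable_ofReal.comp_aemeasurable hre).add
    ((Complex.measurable_ofReal.comp_aemeasurable him).mul_const Complex.I)).congr ?_
  exact Eventually.of_forall fun t => Complex.re_add_im (f t)

lemma limsup_integral_Ioc_div_eq_zero_of_not_integrableOn {F : ℝ → ℝ} {T₀ : ℝ}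
    (hF : ¬IntegrableOn F (Ioc 0 T₀)) :
    limsup (fun T => (∫ t in Ioc 0 T, F t) / T) atTop = 0 := by
  refine (limsup_congr ?_).trans (limsup_const 0)
  filter_upwards [eventually_ge_atTop T₀] with T hT
  have hFT : ¬IntegrableOn F (Ioc 0 T) := fun h => hF (h.mono_set (Ioc_subset_Ioc_right hT))
  rw [integral_undef hFT, zero_div]

theorem exists_bounded_limsup_lt_of_aemeasurable {f : ℝ → ℂ}
    (hfm : AEMeasurable f (volume.restrict (Ioi 0)))
    (hf : ∀ T, IntegrableOn (fun t => ‖f t‖ ^ 2) (Ioc 0 T)) {C : ℝ}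
    (hC : ∀ᶠ T in atTop, ∫ t in Ioc 0 T, ‖f t‖ ^ 2 ≤ C * T)
    (hcns : NotConcentratedOnNullSets fun t => ‖f t‖ ^ 2) {ε : ℝ} (hε : 0 < ε) :
    ∃ h : ℝ → ℂ, Measurable h ∧ (∃ M, ∀ t, ‖h t‖ ≤ M) ∧
      limsup (fun T => (∫ t in Ioc 0 T, ‖f t - h t‖ ^ 2) / T) atTop < ε := by
  obtain ⟨g, hg, hfg⟩ : ∃ g, Measurable g ∧ f =ᵐ[volume.restrict (Ioi 0)] g :=
    ⟨hfm.mk f, hfm.measurable_mk, hfm.ae_eq_mk⟩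
  replace hfg : ∀ s ⊆ Ioi (0 : ℝ), ∀ᵐ t ∂volume.restrict s, f t = g t := fun s hs =>
    ae_restrict_of_ae_restrict_of_subset hs hfg
  have hfg_sq : ∀ s ⊆ Ioi (0 : ℝ), ∫ t in s, ‖f t‖ ^ 2 = ∫ t in s, ‖g t‖ ^ 2 := fun s hs =>
    integral_congr_ae ((hfg s hs).mono fun t ht => by simp only [ht])
  obtain ⟨M, hM, hlim⟩ := exists_limsup_integral_norm_sub_truncate_lt hg
    (fun T => (hf T).congr_fun_ae ((hfg _ Ioc_subset_Ioi_self).mono fun t ht => by simp only [ht]))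
    (hC.mono fun T hT => hfg_sq _ Ioc_subset_Ioi_self ▸ hT)
    (fun S hS h0 => (hcns S hS h0).congr fun T => by
      rw [hfg_sq _ (inter_subset_right.trans Ioc_subset_Ioi_self)]) hε
  refine ⟨truncate M g, hg.truncate M, ⟨M, norm_truncate_le hM g⟩, ?_⟩
  convert hlim using 4 with T
  exact integral_congr_ae ((hfg _ Ioc_subset_Ioi_self).mono fun t ht => by simp only [ht])

theorem stmt13_general (f : ℝ → ℂ)
    (hf : ∀ T : ℝ, IntegrableOn (fun t => ‖f t‖^2) (Set.Ioc 0 T))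
    (c C : ℝ)
    (hbound : ∀ᶠ T in atTop,
      c * T ≤ (∫ t in Set.Ioc (0:ℝ) T, ‖f t‖^2) ∧
      (∫ t in Set.Ioc (0:ℝ) T, ‖f t‖^2) ≤ C * T)
    (hcns : ∀ S : Set ℝ, MeasurableSet S → HasNatDensity S 0 →
      Tendsto (fun T : ℝ => (∫ t in S ∩ Set.Ioc 0 T, ‖f t‖^2) / T) atTop (nhds 0)) :
    ∀ ε > (0:ℝ), ∃ h : ℝ → ℂ, Measurable h ∧ (∃ M, ∀ t, ‖h t‖ ≤ M) ∧
      limsup (fun T : ℝ => (∫ t in Set.Ioc (0:ℝ) T, ‖f t - h t‖^2) / T) atTop < ε := by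
  intro ε hε
  by_cases hmeas : ∀ T : ℝ, IntegrableOn (fun t => ‖f t - 1‖ ^ 2) (Ioc 0 T) ∧
      IntegrableOn (fun t => ‖f t - Complex.I‖ ^ 2) (Ioc 0 T)
  · exact exists_bounded_limsup_lt_of_aemeasurable
      (aemeasurable_Ioi_of_forall_Ioc fun T _ => aemeasurable_of_aemeasurable_norm_sq_sub
        (hf T).aemeasurable (hmeas T).1.aemeasurable (hmeas T).2.aemeasurable)
      hf (hbound.mono fun _ hT => hT.2) hcns hε
  · -- Beyond `T₀` the Bochner integral of `‖f - a‖²` is the junk value `0`.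
    obtain ⟨T₀, hT₀⟩ := not_forall.1 hmeas
    obtain ⟨a, ha, hna⟩ : ∃ a : ℂ, ‖a‖ ≤ 1 ∧
        ¬IntegrableOn (fun t => ‖f t - a‖ ^ 2) (Ioc 0 T₀) := by
      by_cases h1 : IntegrableOn (fun t => ‖f t - 1‖ ^ 2) (Ioc 0 T₀)
      · exact ⟨Complex.I, by simp, not_and.1 hT₀ h1⟩
      · exact ⟨1, by simp, h1⟩
    exact ⟨fun _ => a, measurable_const, ⟨1, fun _ => ha⟩,
      (limsup_integral_Ioc_div_eq_zero_of_not_integrableOn hna).trans_lt hε⟩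

theorem stmt13 (f : ℝ → ℂ)
    (hf : ∀ T : ℝ, IntegrableOn (fun t => ‖f t‖^2) (Set.Ioc 0 T))
    (c C : ℝ) (hc : 0 < c) (hC : 0 < C)
    (hbound : ∀ᶠ T in atTop,
      c * T ≤ (∫ t in Set.Ioc (0:ℝ) T, ‖f t‖^2) ∧
      (∫ t in Set.Ioc (0:ℝ) T, ‖f t‖^2) ≤ C * T)
    (hcns : ∀ S : Set ℝ, MeasurableSet S → HasNatDensity S 0 →
      Tendsto (fun T : ℝ => (∫ t in S ∩ Set.Ioc 0 T, ‖f t‖^2) / T) atTop (nhds 0)) :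
    ∀ ε > (0:ℝ), ∃ h : ℝ → ℂ, Measurable h ∧ (∃ M, ∀ t, ‖h t‖ ≤ M) ∧
      limsup (fun T : ℝ => (∫ t in Set.Ioc (0:ℝ) T, ‖f t - h t‖^2) / T) atTop < ε :=
  stmt13_general f hf c C hbound hcns
end
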